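/- arXiv:2203.15998 — 5 statements merged into one kernel-verified Lean document; each statement's English description precedes it below -/
import Mathlib

section
/- Let R be an integrally closed commutative domain, let σ be any type, and let x, y be elements of the multivariate polynomial ring MvPolynomial σ R with y ≠ 0. If C ∈ R is a nonzero element such that x * x = C(C) * (y * y) in MvPolynomial σ R (where C(·) denotes the constant-polynomial embedding R → MvPolynomial σ R), then there exists an element c ∈ R such that c * c = C and x = C(c) * y. -/
open MvPolynomial

private lemma auxFin {F : Type*} [CommRing F] [IsDomain F] :
    ∀ (n : ℕ) (p : MvPolynomial (Fin n) F), IsUnit p → ∃ k : F, p = C k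
  | 0, p, _ => ⟨_, eq_C_of_isEmpty p⟩
  | n+1, p, hp => by
    have h1 : IsUnit (finSuccEquiv F n p) := hp.map (finSuccEquiv F n)
    obtain ⟨r, hr, hrp⟩ := Polynomial.isUnit_iff.mp h1
    obtain ⟨k, rfl⟩ := auxFin n r hr
    refine ⟨k, (finSuccEquiv F n).injective ?_⟩
    have h2 : finSuccEquiv F n (C k : MvPolynomial (Fin (n+1)) F) = Polynomial.C (C k) := by
      simp [finSuccEquiv_apply]
    rw [h2, ← hrp]

private lemma auxUnitFintype {F τ : Type*} [CommRing F] [IsDomain F] [Fintype τ]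
    {p : MvPolynomial τ F} (hp : IsUnit p) : ∃ k : F, p = C k := by
  let e := renameEquiv F (Fintype.equivFin τ)
  obtain ⟨k, hk⟩ := auxFin (Fintype.card τ) (e p) (hp.map e)
  refine ⟨k, e.injective ?_⟩
  rw [hk]
  show _ = e (C k)
  simp [e, renameEquiv_apply, rename_C]

private lemma auxUnit {F σ : Type*} [CommRing F] [IsDomain F]
    {p : MvPolynomial σ F} {a : F} (ha : IsUnit a)
    (hpa : p * p = C a) : ∃ k : F, p = C k := by
  obtain ⟨s, q, rfl⟩ := exists_finset_rename p
  have hinj := rename_injective (R := F) (Subtype.val : {x // x ∈ s} → σ) Subtype.val_injective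
  have hq : q * q = C a := hinj (by rw [map_mul, hpa, rename_C])
  have hqu : IsUnit q := isUnit_of_mul_isUnit_left (y := q) (hq ▸ ha.map (C : F →+* _))
  obtain ⟨k, rfl⟩ := auxUnitFintype hqu
  exact ⟨k, rename_C _ _⟩

/-- Lemma 2.1 of the paper, in polynomial-ring form: over an integrally closed
domain `R`, if `x * x = C c₀ * (y * y)` in `MvPolynomial σ R` with `y ≠ 0` and
`c₀ ≠ 0`, then `c₀` has a square root `c` in `R` with `x = C c * y`. -/
theorem stmt_0 {R : Type*} [CommRing R] [IsDomain R] [IsIntegrallyClosed R]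
    (σ : Type*) (x y : MvPolynomial σ R) (hy : y ≠ 0)
    (c₀ : R) (hc₀ : c₀ ≠ 0)
    (h : x * x = MvPolynomial.C c₀ * (y * y)) :
    ∃ c : R, c * c = c₀ ∧ x = MvPolynomial.C c * y := by
  classical
  let K := FractionRing R
  let φ : MvPolynomial σ R →+* MvPolynomial σ K := MvPolynomial.map (algebraMap R K)
  have hφinj : Function.Injective φ :=
    MvPolynomial.map_injective _ (IsFractionRing.injective R K)
  set c₀' : K := algebraMap R K c₀ with hc₀'def
  have hc₀' : c₀' ≠ 0 := fun hh => hc₀ <|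
    (injective_iff_map_eq_zero _).1 (IsFractionRing.injective R K) _ hh
  have hY : φ y ≠ 0 := fun hh => hy (hφinj (by simpa [map_zero] using hh))
  have hX2 : φ x * φ x = C c₀' * (φ y * φ y) := by
    have := congrArg φ h
    simpa [φ, map_mul, MvPolynomial.map_C] using this
  letI : NormalizationMonoid (MvPolynomial σ K) :=
    (UniqueFactorizationMonoid.normalizationMonoid (α := MvPolynomial σ K)).toNormalizationMonoid
  letI : GCDMonoid (MvPolynomial σ K) := UniqueFactorizationMonoid.toGCDMonoid _
  haveI : IsIntegrallyClosed (MvPolynomial σ K) := GCDMonoid.toIsIntegrallyClosed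
  have hdvd : φ y ∣ φ x := by
    rw [← IsIntegrallyClosed.pow_dvd_pow_iff (two_ne_zero) (a := φ y) (b := φ x)]
    exact ⟨C c₀', by rw [sq, sq, hX2]; ring⟩
  obtain ⟨d, hd⟩ := hdvd
  have hyy : φ y * φ y ≠ 0 := mul_ne_zero hY hY
  have hdd : d * d = C c₀' := by
    apply mul_left_cancel₀ hyy
    rw [mul_comm (φ y * φ y) (C c₀'), ← hX2, hd]; ring
  obtain ⟨k, rfl⟩ := auxUnit (isUnit_iff_ne_zero.mpr hc₀') hdd
  have hkk : k * k = c₀' := by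
    have := hdd; rw [← map_mul] at this
    exact C_injective σ K this
  have hkint : IsIntegral R k := by
    refine ⟨Polynomial.X ^ 2 - Polynomial.C c₀, Polynomial.monic_X_pow_sub_C _ two_ne_zero, ?_⟩
    simp [Polynomial.eval₂_sub, sq, hkk, hc₀'def]
  obtain ⟨c, hc⟩ := IsIntegrallyClosed.isIntegral_iff.mp hkint
  refine ⟨c, ?_, ?_⟩
  · apply IsFractionRing.injective R K
    rw [map_mul, hc, hkk, hc₀'def]
  · apply hφinj
    rw [map_mul, MvPolynomial.map_C, hc, hd, mul_comm]
end

section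
/- Let R be a commutative ring, n a natural number, and σ : Fin n → Type an n-tuple of types. Consider the R-linear map μ from the tensor product ⨂_{i : Fin n} (σ i →₀ R) of the free R-modules σ i →₀ R to the polynomial ring MvPolynomial (Σ i, σ i) R which is determined on pure tensors by μ(f₁ ⊗ ⋯ ⊗ fₙ) = ∏_{i : Fin n} (f i).sum (fun b r => C r * X ⟨i, b⟩), i.e. μ is PiTensorProduct.lift of the multilinear map sending a family (f i)_i of finitely supported functions to the product over i of the corresponding linear polynomials in the variables X⟨i,b⟩. Then μ is injective. -/
open scoped TensorProduct

theorem aux_D_inj {n : ℕ} (σ : Fin n → Type*) :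
    Function.Injective (fun p : (∀ i, σ i) =>
      ∑ i, Finsupp.single (⟨i, p i⟩ : Σ i, σ i) (1 : ℕ)) := by
  classical
  have key : ∀ (p : ∀ i, σ i) (i : Fin n) (b : σ i),
      (∑ j, Finsupp.single (⟨j, p j⟩ : Σ i, σ i) (1 : ℕ)) ⟨i, b⟩
        = if p i = b then 1 else 0 := by
    intro p i b
    rw [Finsupp.finset_sum_apply, Finset.sum_eq_single i]
    · simp [Finsupp.single_apply, Sigma.ext_iff]
    · intro j _ hj
      simp [Finsupp.single_apply, Sigma.ext_iff, hj]
    · simp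
  intro p q h
  funext i
  have h1 := congrArg (fun d : (Σ i, σ i) →₀ ℕ => d ⟨i, p i⟩) h
  simp only [key] at h1
  by_contra hne
  simp [if_neg (fun hq : q i = p i => hne hq.symm)] at h1

theorem aux_prod_X {n : ℕ} {σ : Fin n → Type*} {R : Type*} [CommRing R] (p : ∀ i, σ i) :
    (∏ i, (MvPolynomial.X (⟨i, p i⟩ : Σ i, σ i) : MvPolynomial (Σ i, σ i) R))
      = MvPolynomial.monomial (∑ i, Finsupp.single (⟨i, p i⟩ : Σ i, σ i) 1) 1 := by
  classical
  induction (Finset.univ : Finset (Fin n)) using Finset.induction with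
  | empty => simp
  | insert a s h ih =>
      rw [Finset.prod_insert h, Finset.sum_insert h, ih, MvPolynomial.X,
        MvPolynomial.monomial_mul, one_mul]

theorem aux_span {n : ℕ} {σ : Fin n → Type*} {R : Type*} [CommRing R]
    (x : ⨂[R] i, (σ i →₀ R)) :
    x ∈ Submodule.span R (Set.range (fun p : ∀ i, σ i =>
      PiTensorProduct.tprod R (fun i => Finsupp.single (p i) (1 : R)))) := by
  classical
  induction x using PiTensorProduct.induction_on with
  | smul_tprod r f =>
      refine Submodule.smul_mem _ r ?_
      have hf : ∀ i, f i = ∑ b ∈ (f i).support, (f i) b • Finsupp.single b (1 : R) := by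
        intro i
        conv_lhs => rw [← Finsupp.sum_single (f i)]
        rw [Finsupp.sum]
        refine Finset.sum_congr rfl fun b _ => ?_
        rw [Finsupp.smul_single, smul_eq_mul, mul_one]
      have h1 : (PiTensorProduct.tprod R f : ⨂[R] i, (σ i →₀ R))
          = ∑ p ∈ Fintype.piFinset (fun i => (f i).support),
              (∏ i, (f i) (p i)) • PiTensorProduct.tprod R
                (fun i => Finsupp.single (p i) (1 : R)) := by
        conv_lhs => rw [show f = fun i => ∑ b ∈ (f i).support, (f i) b • Finsupp.single b (1:R)
          from funext hf]
        rw [MultilinearMap.map_sum_finset (PiTensorProduct.tprod R)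
          (fun i b => (f i) b • Finsupp.single b (1:R))]
        exact Finset.sum_congr rfl fun p _ =>
          MultilinearMap.map_smul_univ _ (fun i => (f i) (p i)) _
      rw [h1]
      exact Submodule.sum_mem _ fun p _ => Submodule.smul_mem _ _
        (Submodule.subset_span ⟨p, rfl⟩)
  | add a b ha hb => exact Submodule.add_mem _ ha hb

/-- Lemma 2.2(a) of the paper: the canonical map
`M₁ ⊗ ⋯ ⊗ Mₙ → Symⁿ(M₁ ⊕ ⋯ ⊕ Mₙ)` is injective, realized for the free
modules `Mᵢ = σ i →₀ R` with the symmetric algebra of the direct sum realized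
as `MvPolynomial (Σ i, σ i) R`: the linear map sending the pure tensor
`f₁ ⊗ ⋯ ⊗ fₙ` to the product of the linear forms `∑_b (f i) b • X ⟨i, b⟩`
is injective. -/
theorem stmt_3 {R : Type*} [CommRing R] (n : ℕ) (σ : Fin n → Type*)
    (μ : (⨂[R] i, (σ i →₀ R)) →ₗ[R] MvPolynomial (Σ i, σ i) R)
    (hμ : ∀ f : (i : Fin n) → (σ i →₀ R),
      μ (PiTensorProduct.tprod R f)
        = ∏ i, (f i).sum fun b r => MvPolynomial.C r * MvPolynomial.X ⟨i, b⟩) :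
    Function.Injective μ := by
  classical
  have hv : ∀ p : ∀ i, σ i,
      μ (PiTensorProduct.tprod R fun i => Finsupp.single (p i) (1 : R))
        = MvPolynomial.monomial (∑ i, Finsupp.single (⟨i, p i⟩ : Σ i, σ i) 1) 1 := by
    intro p
    rw [hμ, ← aux_prod_X]
    refine Finset.prod_congr rfl fun i _ => ?_
    rw [Finsupp.sum_single_index (by simp)]
    simp
  have li : LinearIndependent R fun p : ∀ i, σ i =>
      (MvPolynomial.monomial (∑ i, Finsupp.single (⟨i, p i⟩ : Σ i, σ i) 1)
        (1 : R) : MvPolynomial (Σ i, σ i) R) := by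
    have h := (MvPolynomial.basisMonomials (Σ i, σ i) R).linearIndependent.comp _ (aux_D_inj σ)
    exact h
  intro a b hab
  obtain ⟨c, hc⟩ := (Finsupp.mem_span_range_iff_exists_finsupp).1 (aux_span a)
  obtain ⟨d, hd⟩ := (Finsupp.mem_span_range_iff_exists_finsupp).1 (aux_span b)
  have hμc : μ a = Finsupp.linearCombination R (fun p : ∀ i, σ i =>
      (MvPolynomial.monomial (∑ i, Finsupp.single (⟨i, p i⟩ : Σ i, σ i) 1)
        (1 : R) : MvPolynomial (Σ i, σ i) R)) c := by
    rw [← hc, map_finsuppSum, Finsupp.linearCombination_apply]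
    exact Finsupp.sum_congr fun p _ => by rw [map_smul, hv]
  have hμd : μ b = Finsupp.linearCombination R (fun p : ∀ i, σ i =>
      (MvPolynomial.monomial (∑ i, Finsupp.single (⟨i, p i⟩ : Σ i, σ i) 1)
        (1 : R) : MvPolynomial (Σ i, σ i) R)) d := by
    rw [← hd, map_finsuppSum, Finsupp.linearCombination_apply]
    exact Finsupp.sum_congr fun p _ => by rw [map_smul, hv]
  have h0 : Finsupp.linearCombination R (fun p : ∀ i, σ i =>
      (MvPolynomial.monomial (∑ i, Finsupp.single (⟨i, p i⟩ : Σ i, σ i) 1)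
        (1 : R) : MvPolynomial (Σ i, σ i) R)) (c - d) = 0 := by
    rw [map_sub, ← hμc, ← hμd, hab, sub_self]
  have hcd : c = d := sub_eq_zero.mp (linearIndependent_iff.1 li (c - d) h0)
  rw [← hc, ← hd, hcd]
end

section
/- Let R be a commutative ring and G a commutative group. Let ε : MonoidAlgebra R G →ₐ[R] R be the augmentation homomorphism (the R-algebra map sending every group element g to 1), and let I := ker ε be the augmentation ideal. Let ι : MonoidAlgebra R G ≃ₐ[R] MonoidAlgebra R G be the R-algebra automorphism induced by the group automorphism g ↦ g⁻¹ of G. Then for every natural number n and every x ∈ Iⁿ, the element ι(x) − (−1)ⁿ • x lies in I^{n+1}; in other words, ι induces multiplication by (−1)ⁿ on the quotient Iⁿ/I^{n+1}. -/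
/-- The involution of the group algebra induced by inversion on a commutative
group `G` preserves the powers of the augmentation ideal `I` and induces
multiplication by `(-1)ⁿ` on `Iⁿ/I^{n+1}`: for `x ∈ Iⁿ`, the element
`ι x - (-1)ⁿ • x` lies in `I^{n+1}`. -/
theorem stmt_5 {R : Type*} [CommRing R] {G : Type*} [CommGroup G]
    (ε : MonoidAlgebra R G →ₐ[R] R)
    (hε : ∀ g : G, ε (MonoidAlgebra.of R G g) = 1)
    (ι : MonoidAlgebra R G ≃ₐ[R] MonoidAlgebra R G)
    (hι : ∀ g : G, ι (MonoidAlgebra.of R G g) = MonoidAlgebra.of R G g⁻¹)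
    (n : ℕ) (x : MonoidAlgebra R G)
    (hx : x ∈ (RingHom.ker ε.toRingHom) ^ n) :
    ι x - ((-1 : ℤ) ^ n) • x ∈ (RingHom.ker ε.toRingHom) ^ (n + 1) := by
  set I : Ideal (MonoidAlgebra R G) := RingHom.ker ε.toRingHom with hIdef
  have hcomp : ∀ y, ε (ι y) = ε y := by
    have h : (ε.comp ι.toAlgHom) = ε := MonoidAlgebra.algHom_ext (fun g => by
      show ε (ι (MonoidAlgebra.of R G g)) = ε (MonoidAlgebra.of R G g)
      rw [hι, hε, hε]) (Subsingleton.elim _ _)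
    intro y
    calc ε (ι y) = (ε.comp ι.toAlgHom) y := rfl
      _ = ε y := by rw [h]
  have hmemI : ∀ y : MonoidAlgebra R G, y ∈ I ↔ ε y = 0 := fun y => Iff.rfl
  have hιI : ∀ y ∈ I, ι y ∈ I := by
    intro y hy
    rw [hmemI] at hy ⊢
    rw [hcomp, hy]
  have hof : ∀ g : G, MonoidAlgebra.of R G g - 1 ∈ I := by
    intro g
    rw [hmemI, map_sub, map_one, hε, sub_self]
  have key : ∀ y : MonoidAlgebra R G,
      y + ι y - algebraMap R (MonoidAlgebra R G) (2 * ε y) ∈ I ^ 2 := by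
    intro y
    induction y using MonoidAlgebra.induction_on with
    | of g =>
        have h1 : MonoidAlgebra.of R G g - 1 ∈ I := hof g
        have h2 : MonoidAlgebra.of R G g⁻¹ - 1 ∈ I := hof g⁻¹
        have hmul : (MonoidAlgebra.of R G g - 1) * (MonoidAlgebra.of R G g⁻¹ - 1) ∈ I ^ 2 := by
          rw [sq]
          exact Ideal.mul_mem_mul h1 h2
        have heq : MonoidAlgebra.of R G g + ι (MonoidAlgebra.of R G g)
            - algebraMap R (MonoidAlgebra R G) (2 * ε (MonoidAlgebra.of R G g))
            = -((MonoidAlgebra.of R G g - 1) * (MonoidAlgebra.of R G g⁻¹ - 1)) := by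
          rw [hι, hε]
          have hgg : MonoidAlgebra.of R G g * MonoidAlgebra.of R G g⁻¹ = 1 := by
            rw [← map_mul, mul_inv_cancel, map_one]
          have h2' : algebraMap R (MonoidAlgebra R G) (2 * 1) = 2 := by
            rw [mul_one]; exact map_ofNat _ 2
          rw [h2']
          linear_combination hgg
        rw [heq]
        exact neg_mem hmul
    | add a b ha hb =>
        have := Ideal.add_mem _ ha hb
        have heq : a + b + ι (a + b) - algebraMap R (MonoidAlgebra R G) (2 * ε (a + b))
            = (a + ι a - algebraMap R (MonoidAlgebra R G) (2 * ε a))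
              + (b + ι b - algebraMap R (MonoidAlgebra R G) (2 * ε b)) := by
          rw [map_add, map_add, mul_add, map_add]
          ring
        rw [heq]
        exact this
    | smul r f hf =>
        have heq : r • f + ι (r • f) - algebraMap R (MonoidAlgebra R G) (2 * ε (r • f))
            = r • (f + ι f - algebraMap R (MonoidAlgebra R G) (2 * ε f)) := by
          rw [map_smul, smul_sub, smul_add]
          congr 1
          rw [show (2 : R) * ε (r • f) = r * (2 * ε f) by
                rw [map_smul, smul_eq_mul]; ring,
              map_mul, ← Algebra.smul_def]
        rw [heq]
        exact Submodule.smul_of_tower_mem _ r hf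
  have key' : ∀ b ∈ I, ι b + b ∈ I ^ 2 := by
    intro b hb
    have hb0 : ε b = 0 := (hmemI b).mp hb
    have := key b
    rw [hb0, mul_zero, map_zero, sub_zero] at this
    rw [add_comm]
    exact this
  -- main induction
  induction n generalizing x with
  | zero =>
      rw [zero_add, pow_one]
      simp only [pow_zero, one_smul]
      exact (hmemI _).mpr (by rw [map_sub, hcomp, sub_self])
  | succ n ih =>
      rw [pow_succ] at hx
      refine Submodule.mul_induction_on hx ?_ ?_
      · intro m hm b hb
        have h1 : (ι m - ((-1 : ℤ) ^ n) • m) * ι b ∈ I ^ (n + 1 + 1) := by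
          rw [pow_succ]
          exact Ideal.mul_mem_mul (ih m hm) (hιI b hb)
        have h2 : m * (ι b + b) ∈ I ^ (n + 1 + 1) := by
          have : I ^ (n + 1 + 1) = I ^ n * I ^ 2 := by
            rw [← pow_add]
          rw [this]
          exact Ideal.mul_mem_mul hm (key' b hb)
        have h2' : ((-1 : ℤ) ^ n) • (m * (ι b + b)) ∈ I ^ (n + 1 + 1) :=
          zsmul_mem h2 _
        have heq : ι (m * b) - ((-1 : ℤ) ^ (n + 1)) • (m * b)
            = (ι m - ((-1 : ℤ) ^ n) • m) * ι b + ((-1 : ℤ) ^ n) • (m * (ι b + b)) := by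
          rw [map_mul]
          simp only [zsmul_eq_mul]
          push_cast
          ring
        rw [heq]
        exact Ideal.add_mem _ h1 h2'
      · intro y z hy hz
        have heq : ι (y + z) - ((-1 : ℤ) ^ (n + 1)) • (y + z)
            = (ι y - ((-1 : ℤ) ^ (n + 1)) • y) + (ι z - ((-1 : ℤ) ^ (n + 1)) • z) := by
          rw [map_add, smul_add]
          ring
        rw [heq]
        exact Ideal.add_mem _ hy hz
end

section
/- Let k be a field of characteristic zero, H a commutative group, Q a finite commutative group, and set G := H × Q. Let I(H) ⊆ MonoidAlgebra k H and I(G) ⊆ MonoidAlgebra k G denote the augmentation ideals, i.e. the kernels of the k-algebra maps sending all group elements to 1. The k-algebra homomorphism j : MonoidAlgebra k H → MonoidAlgebra k G induced by the inclusion h ↦ (h, 1) maps I(H)ⁿ into I(G)ⁿ for every n, and for every n ≥ 1 the induced k-linear map on quotients I(H)ⁿ/I(H)^{n+1} → I(G)ⁿ/I(G)^{n+1} is bijective. -/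
/-- Section 2.2 of the paper, for ordinary group algebras over a field of
characteristic zero: if `G = H × Q` with `Q` finite, the algebra map
`j : k[H] → k[G]` induced by `h ↦ (h, 1)` maps `I(H)ⁿ` into `I(G)ⁿ`, and for
`n ≥ 1` the induced map `I(H)ⁿ/I(H)^{n+1} → I(G)ⁿ/I(G)^{n+1}` is bijective
(bijectivity being expressed by surjectivity and injectivity modulo the next
power). -/
theorem stmt_7 {k : Type*} [Field k] [CharZero k]
    {H : Type*} [CommGroup H] {Q : Type*} [CommGroup Q] [Finite Q]
    (εH : MonoidAlgebra k H →ₐ[k] k)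
    (hεH : ∀ h : H, εH (MonoidAlgebra.of k H h) = 1)
    (εG : MonoidAlgebra k (H × Q) →ₐ[k] k)
    (hεG : ∀ g : H × Q, εG (MonoidAlgebra.of k (H × Q) g) = 1)
    (j : MonoidAlgebra k H →ₐ[k] MonoidAlgebra k (H × Q))
    (hj : ∀ h : H, j (MonoidAlgebra.of k H h) = MonoidAlgebra.of k (H × Q) (h, 1)) :
    (∀ (n : ℕ), ∀ x ∈ (RingHom.ker εH.toRingHom) ^ n,
        j x ∈ (RingHom.ker εG.toRingHom) ^ n) ∧
    (∀ n : ℕ, 1 ≤ n →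
      (∀ x ∈ (RingHom.ker εG.toRingHom) ^ n,
        ∃ y ∈ (RingHom.ker εH.toRingHom) ^ n,
          j y - x ∈ (RingHom.ker εG.toRingHom) ^ (n + 1)) ∧
      (∀ y ∈ (RingHom.ker εH.toRingHom) ^ n,
        j y ∈ (RingHom.ker εG.toRingHom) ^ (n + 1) →
          y ∈ (RingHom.ker εH.toRingHom) ^ (n + 1))) := by
  classical
  have : Fintype Q := Fintype.ofFinite Q
  set KH := RingHom.ker εH.toRingHom with hKH
  set KG := RingHom.ker εG.toRingHom with hKG
  -- the projection π : k[G] → k[H]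
  set π : MonoidAlgebra k (H × Q) →ₐ[k] MonoidAlgebra k H :=
    (MonoidAlgebra.lift k (MonoidAlgebra k H) (H × Q))
      ((MonoidAlgebra.of k H).comp (MonoidHom.fst H Q)) with hπdef
  have hπ : ∀ g : H × Q, π (MonoidAlgebra.of k (H × Q) g) = MonoidAlgebra.of k H g.1 := by
    intro g; simp [hπdef]
  -- j maps powers of KH into powers of KG
  have hεGj : ∀ x, εG (j x) = εH x := by
    intro x
    have : εG.comp j = εH := MonoidAlgebra.algHom_ext (single_one_left := Subsingleton.elim _ _) fun h => by
      have h1 : εG (j (MonoidAlgebra.single h (1:k))) = 1 := by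
        have := hj h; rw [MonoidAlgebra.of_apply] at this
        rw [this]; exact hεG _
      have h2 : εH (MonoidAlgebra.single h (1:k)) = 1 := hεH h
      simp [AlgHom.comp_apply, h1, h2]
    rw [← this]; rfl
  have hεHπ : ∀ x, εH (π x) = εG x := by
    intro x
    have : εH.comp π = εG := MonoidAlgebra.algHom_ext (single_one_left := Subsingleton.elim _ _) fun g => by
      have h1 : εH (π (MonoidAlgebra.single g (1:k))) = 1 := by
        have := hπ g; rw [MonoidAlgebra.of_apply] at this
        rw [this]; exact hεH _
      simp only [AlgHom.comp_apply, h1]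
      rw [← MonoidAlgebra.of_apply, hεG]
    rw [← this]; rfl
  have hjpow : ∀ n, ∀ x ∈ KH ^ n, j x ∈ KG ^ n := by
    intro n x hx
    have hmap : Ideal.map j.toRingHom KH ≤ KG := by
      rw [Ideal.map_le_iff_le_comap]
      intro z hz
      simp only [hKH, RingHom.mem_ker] at hz
      simp only [hKG, Ideal.mem_comap, RingHom.mem_ker]
      show εG (j z) = 0
      rw [hεGj]; exact hz
    have : j x ∈ Ideal.map j.toRingHom (KH ^ n) := Ideal.mem_map_of_mem _ hx
    rw [Ideal.map_pow] at this
    exact Ideal.pow_right_mono hmap n this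
  have hπpow : ∀ n, ∀ x ∈ KG ^ n, π x ∈ KH ^ n := by
    intro n x hx
    have hmap : Ideal.map π.toRingHom KG ≤ KH := by
      rw [Ideal.map_le_iff_le_comap]
      intro z hz
      simp only [hKG, RingHom.mem_ker] at hz
      simp only [hKH, Ideal.mem_comap, RingHom.mem_ker]
      show εH (π z) = 0
      rw [hεHπ]; exact hz
    have : π x ∈ Ideal.map π.toRingHom (KG ^ n) := Ideal.mem_map_of_mem _ hx
    rw [Ideal.map_pow] at this
    exact Ideal.pow_right_mono hmap n this
  -- π ∘ j = id
  have hπj : ∀ x, π (j x) = x := by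
    intro x
    have : π.comp j = AlgHom.id k (MonoidAlgebra k H) := MonoidAlgebra.algHom_ext (single_one_left := Subsingleton.elim _ _) fun h => by
      have h1 : j (MonoidAlgebra.single h (1:k)) = MonoidAlgebra.of k (H × Q) (h, 1) := hj h
      simp only [AlgHom.comp_apply, h1]
      rw [← MonoidAlgebra.of_apply, hπ]
      rfl
    calc π (j x) = (π.comp j) x := rfl
    _ = x := by rw [this]; rfl
  -- the idempotent e
  set e : MonoidAlgebra k (H × Q) :=
    (Fintype.card Q : k)⁻¹ • ∑ q : Q, MonoidAlgebra.of k (H × Q) (1, q) with he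
  have hcard : (Fintype.card Q : k) ≠ 0 := by
    exact_mod_cast Nat.cast_ne_zero.mpr Fintype.card_ne_zero
  have hεGe : εG e = 1 := by
    rw [he, map_smul, map_sum]
    simp only [hεG, Finset.sum_const, Finset.card_univ, nsmul_eq_mul, mul_one, smul_eq_mul]
    field_simp
  have hqe : ∀ q : Q, MonoidAlgebra.of k (H × Q) (1, q) * e = e := by
    intro q
    rw [he, mul_smul_comm, Finset.mul_sum]
    congr 1
    have : ∀ q' : Q,
        MonoidAlgebra.of k (H × Q) (1, q) * MonoidAlgebra.of k (H × Q) (1, q')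
          = MonoidAlgebra.of k (H × Q) (1, q * q') := by
      intro q'; rw [← map_mul]; congr 1; simp [Prod.ext_iff]
    calc ∑ q' : Q, MonoidAlgebra.of k (H × Q) (1, q) * MonoidAlgebra.of k (H × Q) (1, q')
        = ∑ q' : Q, MonoidAlgebra.of k (H × Q) (1, q * q') := by
          exact Finset.sum_congr rfl fun q' _ => this q'
      _ = ∑ q' : Q, MonoidAlgebra.of k (H × Q) (1, q') :=
          Fintype.sum_bijective (fun x => q * x) (Group.mulLeft_bijective q) _ _ (fun x => rfl)
  have hπe : π e = 1 := by
    rw [he, map_smul, map_sum]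
    simp only [hπ]
    simp only [map_one]
    rw [Finset.sum_const, Finset.card_univ]
    rw [← Nat.cast_smul_eq_nsmul k, smul_smul, inv_mul_cancel₀ hcard, one_smul]
  -- key identity: x * e = j (π x) * e
  have hkey : ∀ x : MonoidAlgebra k (H × Q), x * e = j (π x) * e := by
    intro x
    induction x using MonoidAlgebra.induction_on with
    | of g =>
      obtain ⟨h, q⟩ := g
      have hsplit : MonoidAlgebra.of k (H × Q) (h, q)
          = MonoidAlgebra.of k (H × Q) (h, 1) * MonoidAlgebra.of k (H × Q) (1, q) := by
        rw [← map_mul]; congr 1; simp [Prod.ext_iff]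
      rw [hπ, hj, hsplit, mul_assoc, hqe]
    | add f g hf hg => rw [add_mul, hf, hg, map_add, map_add, add_mul]
    | smul r f hf => rw [smul_mul_assoc, hf, map_smul, map_smul, smul_mul_assoc]
  have hee : e * e = e := by
    have := hkey e
    rw [hπe, map_one, one_mul] at this
    exact this
  have h1e : (1 : MonoidAlgebra k (H × Q)) - e ∈ KG := by
    simp only [hKG, RingHom.mem_ker]
    show εG (1 - e) = 0
    rw [map_sub, map_one, hεGe, sub_self]
  constructor
  · exact hjpow
  · intro n _
    constructor
    · intro x hx
      refine ⟨π x, hπpow n x hx, ?_⟩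
      set z := j (π x) - x with hz
      have hzn : z ∈ KG ^ n := Submodule.sub_mem _ (hjpow n _ (hπpow n x hx)) hx
      have hze : z * e = 0 := by
        rw [hz, sub_mul, hkey x, sub_self]
      have hzz : z = z * (1 - e) := by
        rw [mul_sub, mul_one, hze, sub_zero]
      rw [hzz, pow_succ]
      exact Ideal.mul_mem_mul hzn h1e
    · intro y _ hjy
      have := hπpow (n + 1) (j y) hjy
      rwa [hπj] at this
end

section
/- Let G be a group and H a normal subgroup such that the quotient group Q := G ⧸ H is finite and commutative; let π : G →* Q be the canonical projection. Let ξ : G →* ℂˣ be a group homomorphism and let χ : H →* ℂˣ be its restriction to H. Let X := (Q →* ℂˣ) be the (finite) set of characters of Q, and define the ℂ-linear map Φ : (X → ℂ) → (G → ℂ) by Φ w g = ∑_{η ∈ X} w η * (ξ g : ℂ) * (η (π g) : ℂ). Then: (i) Φ is injective; (ii) the range of Φ is exactly the subspace V of all functions f : G → ℂ satisfying f (h * g) = (χ h : ℂ) * f g for all h ∈ H and g ∈ G; and (iii) Φ is G-equivariant: for every g₀ ∈ G and w : X → ℂ one has Φ (fun η => (ξ g₀ : ℂ) * (η (π g₀)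 : ℂ) * w η) = fun x => Φ w (x * g₀). -/
lemma stmt_10_aux_card (Q : Type*) [CommGroup Q] [Finite Q] [Fintype Q]
    [Fintype (Q →* ℂˣ)] : Fintype.card (Q →* ℂˣ) = Fintype.card Q := by
  haveI : NeZero (Monoid.exponent Q) := ⟨Monoid.exponent_ne_zero_of_finite⟩
  obtain ⟨e⟩ := CommGroup.monoidHom_mulEquiv_of_hasEnoughRootsOfUnity Q ℂ
  exact Fintype.card_congr e.toEquiv

/-- The decomposition `Ind_H^G(χ) ≅ ⊕_{η ∈ Q^*} ξ·η` of Lemma 4.1 of the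
paper: for a normal subgroup `H ≤ G` with finite commutative quotient
`Q = G ⧸ H` and a character `ξ` of `G` restricting to `χ` on `H`, the map
`Φ w g = ∑_{η} w η * ξ g * η (π g)` is injective, has range exactly the space
of `χ`-equivariant functions on `G`, and is `G`-equivariant. -/
theorem stmt_10 {G : Type*} [Group G] (H : Subgroup G) [H.Normal]
    [Finite (G ⧸ H)] (hQcomm : ∀ x y : G ⧸ H, x * y = y * x)
    [Fintype ((G ⧸ H) →* ℂˣ)]
    (ξ : G →* ℂˣ) (χ : (H : Subgroup G) →* ℂˣ)
    (hχ : ∀ h : H, χ h = ξ (h : G))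
    (Φ : (((G ⧸ H) →* ℂˣ) → ℂ) → (G → ℂ))
    (hΦ : ∀ (w : ((G ⧸ H) →* ℂˣ) → ℂ) (g : G),
      Φ w g = ∑ η : (G ⧸ H) →* ℂˣ,
        w η * ((ξ g : ℂˣ) : ℂ) * ((η (QuotientGroup.mk g) : ℂˣ) : ℂ)) :
    Function.Injective Φ ∧
    Set.range Φ
      = {f : G → ℂ | ∀ (h : H) (g : G), f ((h : G) * g) = ((χ h : ℂˣ) : ℂ) * f g} ∧
    (∀ (g₀ : G) (w : ((G ⧸ H) →* ℂˣ) → ℂ),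
      Φ (fun η => ((ξ g₀ : ℂˣ) : ℂ) * ((η (QuotientGroup.mk g₀) : ℂˣ) : ℂ) * w η)
        = fun x => Φ w (x * g₀)) := by
  classical
  haveI : Fintype (G ⧸ H) := Fintype.ofFinite _
  -- linear independence of the characters as functions `G ⧸ H → ℂ`
  have hLI : LinearIndependent ℂ
      (fun (η : (G ⧸ H) →* ℂˣ) (q : G ⧸ H) => ((η q : ℂˣ) : ℂ)) :=
    (linearIndependent_monoidHom (G ⧸ H) ℂ).comp
      (fun η : (G ⧸ H) →* ℂˣ => (Units.coeHom ℂ).comp η)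
      (fun a b hab => MonoidHom.ext fun q =>
        Units.ext (DFunLike.congr_fun hab q))
  have hLI' := Fintype.linearIndependent_iff.mp hLI
  -- injectivity
  have hinj : Function.Injective Φ := by
    intro w₁ w₂ hw
    funext η
    have key : ∀ q : G ⧸ H,
        ∑ η : (G ⧸ H) →* ℂˣ, (w₁ η - w₂ η) * ((η q : ℂˣ) : ℂ) = 0 := by
      intro q
      have hg : (QuotientGroup.mk q.out : G ⧸ H) = q := Quotient.out_eq q
      have h1 := (hΦ w₁ q.out).symm.trans ((congrFun hw q.out).trans (hΦ w₂ q.out))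
      rw [hg] at h1
      have hne : ((ξ q.out : ℂˣ) : ℂ) ≠ 0 := Units.ne_zero _
      have h2 : ∑ η : (G ⧸ H) →* ℂˣ,
          (w₁ η - w₂ η) * ((η q : ℂˣ) : ℂ) * ((ξ q.out : ℂˣ) : ℂ) = 0 := by
        rw [← sub_eq_zero] at h1
        rw [← h1, ← Finset.sum_sub_distrib]
        exact Finset.sum_congr rfl fun η _ => by ring
      rw [← Finset.sum_mul] at h2
      exact (mul_eq_zero.mp h2).resolve_right hne
    have h0 := hLI' (fun η => w₁ η - w₂ η) (by funext q; simpa using key q) η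
    simpa [sub_eq_zero] using h0
  refine ⟨hinj, ?_, ?_⟩
  · -- range
    ext f
    constructor
    · rintro ⟨w, rfl⟩ h g
      rw [hΦ, hΦ]
      have hmk : (QuotientGroup.mk ((h : G) * g) : G ⧸ H) = QuotientGroup.mk g := by
        rw [QuotientGroup.mk_mul, (QuotientGroup.eq_one_iff _).mpr h.2, one_mul]
      rw [Finset.mul_sum]
      refine Finset.sum_congr rfl fun η _ => ?_
      rw [hmk, map_mul, Units.val_mul, hχ h]
      ring
    · intro hf
      have hfF : ∀ g : G, f g = ((ξ g : ℂˣ) : ℂ) *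
          (f (QuotientGroup.mk g : G ⧸ H).out *
            (((ξ (QuotientGroup.mk g : G ⧸ H).out)⁻¹ : ℂˣ) : ℂ)) := by
        intro g
        have hmk : (QuotientGroup.mk ((QuotientGroup.mk g : G ⧸ H).out) : G ⧸ H)
            = QuotientGroup.mk g := Quotient.out_eq _
        have hk : g⁻¹ * (QuotientGroup.mk g : G ⧸ H).out ∈ H := by
          rw [← QuotientGroup.eq]; exact hmk.symm
        have hmem : g * (g⁻¹ * (QuotientGroup.mk g : G ⧸ H).out) * g⁻¹ ∈ H :=
          Subgroup.Normal.conj_mem ‹H.Normal› _ hk g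
        have hgk : (QuotientGroup.mk g : G ⧸ H).out
            = (g * (g⁻¹ * (QuotientGroup.mk g : G ⧸ H).out) * g⁻¹) * g := by group
        have h1 : f ((QuotientGroup.mk g : G ⧸ H).out) =
            ((χ ⟨_, hmem⟩ : ℂˣ) : ℂ) * f g := by
          conv_lhs => rw [hgk]
          exact hf ⟨_, hmem⟩ g
        rw [h1, hχ ⟨_, hmem⟩]
        rw [show ((⟨g * (g⁻¹ * (QuotientGroup.mk g : G ⧸ H).out) * g⁻¹, hmem⟩ : H) : G)
            = g * (g⁻¹ * (QuotientGroup.mk g : G ⧸ H).out) * g⁻¹ from rfl]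
        have h6 : ((ξ ((QuotientGroup.mk g : G ⧸ H).out) : ℂˣ) : ℂ)
            = ((ξ (g * (g⁻¹ * (QuotientGroup.mk g : G ⧸ H).out) * g⁻¹) : ℂˣ) : ℂ)
              * ((ξ g : ℂˣ) : ℂ) := by
          conv_lhs => rw [hgk]
          rw [map_mul, Units.val_mul]
        rw [Units.val_inv_eq_inv_val, h6]
        have h4 : ((ξ g : ℂˣ) : ℂ) ≠ 0 := Units.ne_zero _
        have h5 : ((ξ (g * (g⁻¹ * (QuotientGroup.mk g : G ⧸ H).out) * g⁻¹) : ℂˣ) : ℂ) ≠ 0 :=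
          Units.ne_zero _
        field_simp
      -- the characters span all of `G ⧸ H → ℂ`
      letI : CommGroup (G ⧸ H) :=
        { (inferInstance : Group (G ⧸ H)) with mul_comm := fun a b => hQcomm a b }
      have hcard : Fintype.card ((G ⧸ H) →* ℂˣ) = Module.finrank ℂ ((G ⧸ H) → ℂ) := by
        rw [Module.finrank_pi]
        exact stmt_10_aux_card (G ⧸ H)
      haveI : Nonempty ((G ⧸ H) →* ℂˣ) := ⟨1⟩
      have hspan : (fun q : G ⧸ H => f q.out * (((ξ q.out)⁻¹ : ℂˣ) : ℂ)) ∈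
          Submodule.span ℂ (Set.range
            (fun (η : (G ⧸ H) →* ℂˣ) (q : G ⧸ H) => ((η q : ℂˣ) : ℂ))) := by
        have hb := (basisOfLinearIndependentOfCardEqFinrank hLI hcard).span_eq
        rw [coe_basisOfLinearIndependentOfCardEqFinrank] at hb
        rw [hb]; trivial
      obtain ⟨w, hw⟩ := (Submodule.mem_span_range_iff_exists_fun ℂ).mp hspan
      refine ⟨w, ?_⟩
      funext g
      rw [hΦ, hfF g]
      have hwq := congrFun hw (QuotientGroup.mk g : G ⧸ H)
      simp only [Finset.sum_apply, Pi.smul_apply, smul_eq_mul] at hwq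
      rw [← hwq, Finset.mul_sum]
      exact Finset.sum_congr rfl fun η _ => by ring
  · -- equivariance
    intro g₀ w
    funext x
    rw [hΦ, hΦ]
    refine Finset.sum_congr rfl fun η _ => ?_
    rw [QuotientGroup.mk_mul, map_mul, map_mul, Units.val_mul, Units.val_mul]
    ring
end
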